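/- Let Y be a functional extension of X. Then the S-topology on Y is Hausdorff if and only if for every ξ ∈ Y the ultrafilter U_ξ = {A ⊆ X : ξ ∈ *A} is a Hausdorff ultrafilter on X. -/
import Mathlib


attribute [local instance] Classical.propDecidable

/-- A functional extension of `X`: a proper superset `Y ⊇ X` (given via an injective,
non-surjective inclusion) with two designated distinct elements `0, 1 ∈ X`, together with
a distinguished extension `star f : Y → Y` of every `f : X → X`, preserving compositions
and equalizers, and with directed Puritz preorder. -/
structure FunctionalExtension (X Y : Type*) where
  zero : X
  one : X
  zero_ne_one : zero ≠ one
  incl : X → Y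
  incl_injective : Function.Injective incl
  proper : ¬ Function.Surjective incl
  star : (X → X) → Y → Y
  star_incl : ∀ (f : X → X) (x : X), star f (incl x) = incl (f x)
  comp : ∀ f g : X → X, star (g ∘ f) = star g ∘ star f
  equ : ∀ f g : X → X,
    star (fun x => if f x = g x then one else zero) =
      fun ξ => if star f ξ = star g ξ then incl one else incl zero
  dir : ∀ ξ η : Y, ∃ (p₁ p₂ : X → X) (ζ : Y), star p₁ ζ = ξ ∧ star p₂ ζ = η

namespace FunctionalExtension

variable {X Y : Type*}

/-- The star-extension `*A ⊆ Y` of a subset `A ⊆ X`: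
the set where the extension of the characteristic function of `A` takes the value `1`. -/
def sets (E : FunctionalExtension X Y) (A : Set X) : Set Y :=
  {ξ | E.star (fun x => if x ∈ A then E.one else E.zero) ξ = E.incl E.one}

/-- The S-topology on `Y`: the topology with basis `{*A : A ⊆ X}`. -/
def sTopology (E : FunctionalExtension X Y) : TopologicalSpace Y :=
  TopologicalSpace.generateFrom (Set.range E.sets)

end FunctionalExtension

/-- An ultrafilter `U` on `X` is Hausdorff if for all `f, g : X → X`,
`map f U = map g U` holds iff the equalizer of `f` and `g` belongs to `U`. -/
def IsHausdorffUltrafilter {X : Type*} (U : Ultrafilter X) : Prop :=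
  ∀ f g : X → X,
    Ultrafilter.map f U = Ultrafilter.map g U ↔ {x : X | f x = g x} ∈ U

namespace FunctionalExtension

variable {X Y : Type*} (E : FunctionalExtension X Y)

/-- The characteristic function of `A` with values in `{zero, one}`. -/
noncomputable def chi (A : Set X) : X → X := fun x => if x ∈ A then E.one else E.zero

lemma mem_sets_iff {A : Set X} {ξ : Y} :
    ξ ∈ E.sets A ↔ E.star (E.chi A) ξ = E.incl E.one := Iff.rfl

lemma incl_one_ne_zero : E.incl E.one ≠ E.incl E.zero := fun h =>
  E.zero_ne_one (E.incl_injective h).symm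

lemma star_const (c : X) (ξ : Y) : E.star (fun _ => c) ξ = E.incl c := by
  obtain ⟨p₁, p₂, ζ, h₁, h₂⟩ := E.dir ξ (E.incl c)
  have k : ∀ p : X → X, E.star (fun _ => c) (E.star p ζ) = E.star (fun _ => c) ζ := fun p =>
    (congrFun (E.comp p (fun _ => c)) ζ).symm
  rw [← h₁, k p₁, ← k p₂, h₂, E.star_incl]

lemma star_id (ξ : Y) : E.star id ξ = ξ := by
  obtain ⟨p₁, p₂, ζ, h₁, h₂⟩ := E.dir ξ ξ
  have k : E.star id (E.star p₁ ζ) = E.star p₁ ζ := (congrFun (E.comp p₁ id) ζ).symm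
  rw [← h₁, k]

lemma mem_sets_eq_iff (f g : X → X) (ξ : Y) :
    ξ ∈ E.sets {x | f x = g x} ↔ E.star f ξ = E.star g ξ := by
  have hχ : E.chi {x | f x = g x} = fun x => if f x = g x then E.one else E.zero := rfl
  have h := congrFun (E.equ f g) ξ
  rw [E.mem_sets_iff, hχ]
  simp only [h]
  split_ifs with hc
  · simp [hc]
  · simp only [hc, iff_false]
    exact fun hcon => E.incl_one_ne_zero hcon.symm

lemma star_chi_or (A : Set X) (ξ : Y) :
    E.star (E.chi A) ξ = E.incl E.one ∨ E.star (E.chi A) ξ = E.incl E.zero := by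
  have hf : (fun x => if E.chi A x = (fun _ : X => E.one) x then E.one else E.zero) = E.chi A := by
    funext x
    by_cases hx : x ∈ A <;> simp [chi, hx, E.zero_ne_one]
  have h := congrFun (E.equ (E.chi A) (fun _ => E.one)) ξ
  simp only [hf, E.star_const] at h
  by_cases hc : E.star (E.chi A) ξ = E.incl E.one
  · exact Or.inl hc
  · exact Or.inr (h.trans (if_neg hc))

lemma star_chi_of_notMem {A : Set X} {ξ : Y} (h : ξ ∉ E.sets A) :
    E.star (E.chi A) ξ = E.incl E.zero :=
  (E.star_chi_or A ξ).resolve_left h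

lemma mem_sets_compl_iff (A : Set X) (ξ : Y) : ξ ∈ E.sets Aᶜ ↔ ξ ∉ E.sets A := by
  have hs : {x | E.chi A x = (fun _ : X => E.zero) x} = Aᶜ := by
    ext x
    by_cases hx : x ∈ A <;>
      simp [chi, hx, E.zero_ne_one, (E.zero_ne_one).symm]
  have h := E.mem_sets_eq_iff (E.chi A) (fun _ => E.zero) ξ
  rw [hs, E.star_const] at h
  rw [h]
  constructor
  · intro h0 h1
    have h1' : E.star (E.chi A) ξ = E.incl E.one := h1
    exact E.incl_one_ne_zero (h1'.symm.trans h0)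
  · exact fun h1 => E.star_chi_of_notMem h1

lemma mem_sets_univ (ξ : Y) : ξ ∈ E.sets (Set.univ : Set X) := by
  have h2 : E.chi (Set.univ : Set X) = fun _ => E.one := by funext x; simp [chi]
  show E.star (E.chi Set.univ) ξ = E.incl E.one
  rw [h2, E.star_const]

lemma notMem_sets_empty (ξ : Y) : ξ ∉ E.sets (∅ : Set X) := by
  intro hm
  have h1 : E.star (E.chi (∅ : Set X)) ξ = E.incl E.one := hm
  have h2 : E.chi (∅ : Set X) = fun _ => E.zero := by funext x; simp [chi]
  rw [h2, E.star_const] at h1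
  exact E.incl_one_ne_zero h1.symm

lemma mem_sets_preimage (f : X → X) (A : Set X) (ξ : Y) :
    ξ ∈ E.sets (f ⁻¹' A) ↔ E.star f ξ ∈ E.sets A := by
  have h2 : E.chi (f ⁻¹' A) = E.chi A ∘ f := by
    funext x
    by_cases hx : f x ∈ A <;> simp [chi, hx]
  show E.star (E.chi (f ⁻¹' A)) ξ = _ ↔ E.star (E.chi A) (E.star f ξ) = _
  rw [h2, E.comp]
  rfl

lemma mem_sets_singleton_iff (x₀ : X) (ξ : Y) :
    ξ ∈ E.sets ({x₀} : Set X) ↔ ξ = E.incl x₀ := by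
  have hs : {x | id x = (fun _ : X => x₀) x} = ({x₀} : Set X) := by ext x; simp
  have h := E.mem_sets_eq_iff id (fun _ => x₀) ξ
  rw [hs, E.star_const, E.star_id] at h
  exact h

lemma incl_mem_sets_iff (x : X) (A : Set X) : E.incl x ∈ E.sets A ↔ x ∈ A := by
  rw [E.mem_sets_iff, E.star_incl]
  by_cases hx : x ∈ A <;> simp [chi, hx, (E.incl_one_ne_zero).symm]

lemma mem_sets_inter (A B : Set X) (ξ : Y) (hA : ξ ∈ E.sets A) (hB : ξ ∈ E.sets B) :
    ξ ∈ E.sets (A ∩ B) := by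
  by_cases hBu : B = Set.univ
  · subst hBu
    rw [Set.inter_univ]
    exact hA
  · obtain ⟨x₀, hx₀⟩ := (Set.ne_univ_iff_exists_notMem B).mp hBu
    have hUn : ξ ∈ E.sets (A ∪ {x₀}) := by
      by_cases hx₀A : x₀ ∈ A
      · have hAx : A ∪ {x₀} = A := by
          rw [Set.union_eq_self_of_subset_right]
          simpa using hx₀A
        rw [hAx]; exact hA
      · have hne : ξ ≠ E.incl x₀ := by
          intro hcon
          rw [hcon] at hA
          exact hx₀A ((E.incl_mem_sets_iff x₀ A).mp hA)
        have hcne : ξ ∈ E.sets ({x₀}ᶜ : Set X) := by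
          rw [E.mem_sets_compl_iff, E.mem_sets_singleton_iff]
          exact hne
        have hseq : {x | E.chi (A ∪ {x₀}) x = E.chi A x} = ({x₀}ᶜ : Set X) := by
          ext x
          by_cases hxx : x = x₀
          · subst hxx
            simp [chi, hx₀A, E.zero_ne_one, (E.zero_ne_one).symm]
          · by_cases hxA : x ∈ A <;> simp [chi, hxA, hxx]
        have hiff := E.mem_sets_eq_iff (E.chi (A ∪ {x₀})) (E.chi A) ξ
        rw [hseq] at hiff
        have heq := hiff.mp hcne
        show E.star (E.chi (A ∪ {x₀})) ξ = E.incl E.one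
        rw [heq]
        exact hA
    set s : X → X := fun x => if x ∈ A then x else x₀ with hs_def
    have hEqS : {x | s x = id x} = A ∪ {x₀} := by
      ext x
      by_cases hxA : x ∈ A
      · simp [hs_def, hxA]
      · simp [hs_def, hxA, eq_comm]
    have hsξ : E.star s ξ = ξ := by
      have h := E.mem_sets_eq_iff s id ξ
      rw [hEqS, E.star_id] at h
      exact h.mp hUn
    have hcomp : E.chi (A ∩ B) = E.chi B ∘ s := by
      funext x
      by_cases hxA : x ∈ A
      · by_cases hxB : x ∈ B <;> simp [chi, hs_def, hxA, hxB]
      · simp [chi, hs_def, hxA, hx₀]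
    show E.star (E.chi (A ∩ B)) ξ = E.incl E.one
    rw [hcomp, E.comp]
    show E.star (E.chi B) (E.star s ξ) = E.incl E.one
    rw [hsξ]
    exact hB

lemma sets_mono {A B : Set X} (h : A ⊆ B) {ξ : Y} (hA : ξ ∈ E.sets A) : ξ ∈ E.sets B := by
  by_contra hB
  have h1 : ξ ∈ E.sets Bᶜ := (E.mem_sets_compl_iff B ξ).mpr hB
  have h2 := E.mem_sets_inter A Bᶜ ξ hA h1
  have h3 : A ∩ Bᶜ = ∅ := by
    rw [← Set.diff_eq]
    exact Set.diff_eq_empty.mpr h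
  rw [h3] at h2
  exact E.notMem_sets_empty ξ h2

/-- The ultrafilter `U_ξ = {A ⊆ X : ξ ∈ *A}` associated to a point `ξ ∈ Y`. -/
def uf (ξ : Y) : Ultrafilter X :=
  Ultrafilter.ofComplNotMemIff
    { sets := {A : Set X | ξ ∈ E.sets A}
      univ_sets := E.mem_sets_univ ξ
      sets_of_superset := fun hA hAB => E.sets_mono hAB hA
      inter_sets := fun {A B} hA hB => E.mem_sets_inter A B ξ hA hB }
    (fun A => by
      constructor
      · intro hcn
        by_contra hA
        exact hcn ((E.mem_sets_compl_iff A ξ).mpr hA)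
      · intro hA hc
        exact (E.mem_sets_compl_iff A ξ).mp hc hA)

lemma mem_uf_iff (ξ : Y) (A : Set X) : A ∈ E.uf ξ ↔ ξ ∈ E.sets A := Iff.rfl

lemma eq_of_forall_sets (h2 : @T2Space Y E.sTopology) {a b : Y}
    (h : ∀ A : Set X, a ∈ E.sets A ↔ b ∈ E.sets A) : a = b := by
  by_contra hne
  obtain ⟨u, v, hu, hv, hau, hbv, huv⟩ := @t2_separation Y E.sTopology h2 _ _ hne
  have key : ∀ O : Set Y, TopologicalSpace.GenerateOpen (Set.range E.sets) O →
      (a ∈ O ↔ b ∈ O) := by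
    intro O hO
    induction hO with
    | basic s hs =>
        obtain ⟨A, rfl⟩ := hs
        exact h A
    | univ => simp
    | inter s t _ _ ihs iht => simp only [Set.mem_inter_iff, ihs, iht]
    | sUnion S _ ih =>
        simp only [Set.mem_sUnion]
        exact ⟨fun ⟨s, hsS, hm⟩ => ⟨s, hsS, (ih s hsS).mp hm⟩,
          fun ⟨s, hsS, hm⟩ => ⟨s, hsS, (ih s hsS).mpr hm⟩⟩
  have hbu : b ∈ u := (key u hu).mp hau
  exact (Set.disjoint_left.mp huv hbu) hbv

end FunctionalExtension

/-- The S-topology of a functional extension is Hausdorff iff for every `ξ ∈ Y` the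
associated ultrafilter `U_ξ = {A ⊆ X : ξ ∈ *A}` is a Hausdorff ultrafilter. -/
theorem stmt13 {X Y : Type*} (E : FunctionalExtension X Y) :
    @T2Space Y E.sTopology ↔
      ∀ (ξ : Y) (U : Ultrafilter X),
        (∀ A : Set X, A ∈ U ↔ ξ ∈ E.sets A) → IsHausdorffUltrafilter U := by
  constructor
  · intro h2 ξ U hU f g
    have hmem : ∀ (p : X → X) (A : Set X),
        A ∈ Ultrafilter.map p U ↔ E.star p ξ ∈ E.sets A := by
      intro p A
      rw [Ultrafilter.mem_map, hU, E.mem_sets_preimage]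
    constructor
    · intro hmap
      have key : ∀ A : Set X, E.star f ξ ∈ E.sets A ↔ E.star g ξ ∈ E.sets A := fun A =>
        ((hmem f A).symm.trans (by rw [hmap])).trans (hmem g A)
      have heq := E.eq_of_forall_sets h2 key
      exact (hU _).mpr ((E.mem_sets_eq_iff f g ξ).mpr heq)
    · intro hfg
      have hstar : E.star f ξ = E.star g ξ :=
        (E.mem_sets_eq_iff f g ξ).mp ((hU _).mp hfg)
      ext A
      rw [hmem f A, hmem g A, hstar]
  · intro h
    have inj : ∀ a b : Y, (∀ A : Set X, a ∈ E.sets A ↔ b ∈ E.sets A) → a = b := by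
      intro a b hab
      obtain ⟨p₁, p₂, ζ, h₁, h₂⟩ := E.dir a b
      have hUζ := h ζ (E.uf ζ) (fun A => Iff.rfl)
      have hmap : Ultrafilter.map p₁ (E.uf ζ) = Ultrafilter.map p₂ (E.uf ζ) := by
        ext A
        rw [Ultrafilter.mem_map, Ultrafilter.mem_map]
        show ζ ∈ E.sets _ ↔ ζ ∈ E.sets _
        rw [E.mem_sets_preimage, E.mem_sets_preimage, h₁, h₂]
        exact hab A
      have hEq := (hUζ p₁ p₂).mp hmap
      have hst : E.star p₁ ζ = E.star p₂ ζ := (E.mem_sets_eq_iff p₁ p₂ ζ).mp hEq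
      rw [h₁, h₂] at hst
      exact hst
    refine @T2Space.mk Y E.sTopology ?_
    intro a b hne
    have hnall : ¬ ∀ A : Set X, a ∈ E.sets A ↔ b ∈ E.sets A := fun hall => hne (inj a b hall)
    obtain ⟨A, hA⟩ := not_forall.mp hnall
    have hopen : ∀ B : Set X, @IsOpen Y E.sTopology (E.sets B) := fun B =>
      TopologicalSpace.GenerateOpen.basic _ ⟨B, rfl⟩
    have hdisj : ∀ B : Set X, Disjoint (E.sets B) (E.sets Bᶜ) := fun B =>
      Set.disjoint_left.mpr fun ξ hξ hξc => (E.mem_sets_compl_iff B ξ).mp hξc hξ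
    by_cases ha : a ∈ E.sets A
    · have hb : b ∉ E.sets A := fun hb => hA ⟨fun _ => hb, fun _ => ha⟩
      exact ⟨E.sets A, E.sets Aᶜ, hopen A, hopen Aᶜ, ha,
        (E.mem_sets_compl_iff A b).mpr hb, hdisj A⟩
    · have hb : b ∈ E.sets A := by
        by_contra hb
        exact hA ⟨fun hx => absurd hx ha, fun hx => absurd hx hb⟩
      exact ⟨E.sets Aᶜ, E.sets A, hopen Aᶜ, hopen A,
        (E.mem_sets_compl_iff A a).mpr ha, hb, (hdisj A).symm⟩
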